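/- Fix μ > 0, a = b = 7/2, and a positive integer K. Then the user blocking probability is strictly decreasing in the fronthaul capacity: for every T ∈ ℕ, P_b(K, T+1) < P_b(K, T). -/
import Mathlib


open scoped BigOperators

/-- The distribution of the number of users in the coverage of a cluster of `K` RRUs:
`P_K(n) = b^{Ka} μ^n Γ(n + Ka) / ((μ + b)^{Ka+n} Γ(Ka) n!)` with `a = b = 7/2`. -/
noncomputable def Puser (μ : ℝ) (K : ℕ) (n : ℕ) : ℝ :=
  (7/2 : ℝ) ^ ((K : ℝ) * (7/2)) * μ ^ n * Real.Gamma ((n : ℝ) + (K : ℝ) * (7/2)) /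
    ((μ + 7/2) ^ ((K : ℝ) * (7/2) + (n : ℝ)) * Real.Gamma ((K : ℝ) * (7/2)) *
      (n.factorial : ℝ))

/-- The `n`-th summand of the user blocking probability: `((n − T)/n)·P_K(n)` for
`n ≥ T + 1`, and `0` otherwise. -/
noncomputable def blockTerm (μ : ℝ) (K T : ℕ) (n : ℕ) : ℝ :=
  if T + 1 ≤ n then (((n : ℝ) - (T : ℝ)) / (n : ℝ)) * Puser μ K n else 0

/-- The user blocking probability `P_b(K,T) = Σ_{n=T+1}^∞ ((n − T)/n)·P_K(n)`. -/
noncomputable def Pblock (μ : ℝ) (K T : ℕ) : ℝ := ∑' n : ℕ, blockTerm μ K T n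

lemma Puser_pos (μ : ℝ) (hμ : 0 < μ) (K : ℕ) (hK : 0 < K) (n : ℕ) :
    0 < Puser μ K n := by
  have hKc : (0:ℝ) < (K : ℝ) := by exact_mod_cast hK
  have hc : (0:ℝ) < (K : ℝ) * (7/2) := by linarith
  unfold Puser
  apply div_pos
  · apply mul_pos (mul_pos _ (pow_pos hμ n))
    · exact Real.Gamma_pos_of_pos (by positivity)
    · exact Real.rpow_pos_of_pos (by norm_num) _
  · exact mul_pos (mul_pos (Real.rpow_pos_of_pos (by linarith) _)
      (Real.Gamma_pos_of_pos hc)) (by exact_mod_cast n.factorial_pos)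

lemma Puser_succ (μ : ℝ) (hμ : 0 < μ) (K : ℕ) (hK : 0 < K) (n : ℕ) :
    Puser μ K (n + 1)
      = (μ * ((n : ℝ) + (K : ℝ) * (7/2)) / ((μ + 7/2) * ((n : ℝ) + 1)))
        * Puser μ K n := by
  have hKc : (0:ℝ) < (K : ℝ) := by exact_mod_cast hK
  have hc : (0:ℝ) < (K : ℝ) * (7/2) := by linarith
  have hb : (0:ℝ) < μ + 7/2 := by linarith
  unfold Puser
  have h1 : ((n + 1 : ℕ) : ℝ) = (n : ℝ) + 1 := by push_cast; ring
  rw [h1]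
  have hG : Real.Gamma ((n : ℝ) + 1 + (K : ℝ) * (7/2))
      = ((n : ℝ) + (K : ℝ) * (7/2)) * Real.Gamma ((n : ℝ) + (K : ℝ) * (7/2)) := by
    have := Real.Gamma_add_one (s := (n : ℝ) + (K : ℝ) * (7/2)) (by positivity)
    rw [show (n : ℝ) + 1 + (K : ℝ) * (7/2) = ((n : ℝ) + (K : ℝ) * (7/2)) + 1 by ring,
      this]
  have hR : (μ + 7/2) ^ ((K : ℝ) * (7/2) + ((n : ℝ) + 1))
      = (μ + 7/2) ^ ((K : ℝ) * (7/2) + (n : ℝ)) * (μ + 7/2) := by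
    rw [show (K : ℝ) * (7/2) + ((n : ℝ) + 1) = ((K : ℝ) * (7/2) + (n : ℝ)) + 1 by ring,
      Real.rpow_add hb, Real.rpow_one]
  have hF : ((n + 1).factorial : ℝ) = ((n : ℝ) + 1) * (n.factorial : ℝ) := by
    rw [Nat.factorial_succ]; push_cast; ring
  rw [hG, hR, hF]
  have hRne : (μ + 7/2) ^ ((K : ℝ) * (7/2) + (n : ℝ)) ≠ 0 :=
    (Real.rpow_pos_of_pos hb _).ne'
  have hGne : Real.Gamma ((K : ℝ) * (7/2)) ≠ 0 := (Real.Gamma_pos_of_pos hc).ne'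
  have hFne : (n.factorial : ℝ) ≠ 0 := by exact_mod_cast n.factorial_ne_zero
  have hn1 : ((n : ℝ) + 1) ≠ 0 := by positivity
  field_simp
  ring

lemma Puser_summable (μ : ℝ) (hμ : 0 < μ) (K : ℕ) (hK : 0 < K) :
    Summable (Puser μ K) := by
  set c : ℝ := (K : ℝ) * (7/2) with hcdef
  have hb : (0:ℝ) < μ + 7/2 := by linarith
  set q : ℝ := μ / (μ + 7/2) with hq
  have hq0 : 0 < q := div_pos hμ hb
  have hq1 : q < 1 := (div_lt_one hb).mpr (by linarith)
  set l : ℝ := (q + 1) / 2 with hl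
  have hql : q < l := by rw [hl]; linarith
  have hl1 : l < 1 := by rw [hl]; linarith
  apply summable_of_ratio_norm_eventually_le hl1
  have hKc : (0:ℝ) < (K : ℝ) := by exact_mod_cast hK
  have hc : (0:ℝ) < c := by rw [hcdef]; linarith
  refine Filter.eventually_atTop.2 ⟨⌈c / (l - q)⌉₊, fun n hn => ?_⟩
  have hnc : c / (l - q) ≤ (n : ℝ) := (Nat.ceil_le.1 hn)
  have hlq : 0 < l - q := by linarith
  have hkey : q * ((n : ℝ) + c) ≤ l * ((n : ℝ) + 1) := by
    have h1 : c ≤ (l - q) * (n : ℝ) := by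
      rw [div_le_iff₀ hlq] at hnc; linarith [mul_comm (c / (l-q)) (l-q)]
    nlinarith [hq0.le, hq1.le, hc.le, Nat.cast_nonneg (α := ℝ) n]
  have hpos := Puser_pos μ hμ K hK n
  have hpos1 := Puser_pos μ hμ K hK (n + 1)
  rw [Real.norm_eq_abs, Real.norm_eq_abs, abs_of_pos hpos, abs_of_pos hpos1,
    Puser_succ μ hμ K hK n]
  have hn1 : (0:ℝ) < (n : ℝ) + 1 := by positivity
  have hqmul : q * (μ + 7/2) = μ := div_mul_cancel₀ μ hb.ne'
  have hratio : μ * ((n : ℝ) + c) / ((μ + 7/2) * ((n : ℝ) + 1)) ≤ l := by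
    rw [div_le_iff₀ (by positivity)]
    nlinarith [mul_le_mul_of_nonneg_right hkey hb.le]
  calc μ * ((n : ℝ) + c) / ((μ + 7/2) * ((n : ℝ) + 1)) * Puser μ K n
      ≤ l * Puser μ K n := by
        apply mul_le_mul_of_nonneg_right hratio hpos.le

lemma blockTerm_summable (μ : ℝ) (hμ : 0 < μ) (K : ℕ) (hK : 0 < K) (T : ℕ) :
    Summable (blockTerm μ K T) := by
  apply Summable.of_nonneg_of_le _ _ (Puser_summable μ hμ K hK)
  · intro n
    unfold blockTerm
    split_ifs with h
    · have hn : (0:ℝ) < (n : ℝ) := by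
        have : 0 < n := lt_of_lt_of_le (Nat.succ_pos T) h
        exact_mod_cast this
      have hTn : (T : ℝ) ≤ (n : ℝ) := by
        have : T ≤ n := le_trans (Nat.le_succ T) h
        exact_mod_cast this
      have hP := Puser_pos μ hμ K hK n
      exact mul_nonneg (div_nonneg (by linarith) hn.le) hP.le
    · exact le_refl 0
  · intro n
    unfold blockTerm
    split_ifs with h
    · have hn : (0:ℝ) < (n : ℝ) := by
        have : 0 < n := lt_of_lt_of_le (Nat.succ_pos T) h
        exact_mod_cast this
      have hfrac : ((n : ℝ) - (T : ℝ)) / (n : ℝ) ≤ 1 := by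
        rw [div_le_one hn]
        have : (0:ℝ) ≤ (T : ℝ) := Nat.cast_nonneg T
        linarith
      have hfrac0 : 0 ≤ ((n : ℝ) - (T : ℝ)) / (n : ℝ) := by
        apply div_nonneg _ hn.le
        have : (T : ℝ) ≤ (n : ℝ) := by
          exact_mod_cast le_trans (Nat.le_succ T) h
        linarith
      calc ((n : ℝ) - (T : ℝ)) / (n : ℝ) * Puser μ K n
          ≤ 1 * Puser μ K n :=
            mul_le_mul_of_nonneg_right hfrac (Puser_pos μ hμ K hK n).le
        _ = Puser μ K n := one_mul _
    · exact (Puser_pos μ hμ K hK n).le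

/-- the user blocking probability is strictly decreasing in the
fronthaul capacity `T`. -/
theorem Pblock_strict_anti (μ : ℝ) (hμ : 0 < μ) (K : ℕ) (hK : 0 < K) (T : ℕ) :
    Pblock μ K (T + 1) < Pblock μ K T := by
  unfold Pblock
  apply Summable.tsum_lt_tsum (i := T + 1)
  · intro n
    unfold blockTerm
    split_ifs with h1 h2 h3
    · apply mul_le_mul_of_nonneg_right _ (Puser_pos μ hμ K hK n).le
      have hn : (0:ℝ) < (n : ℝ) := by
        have : 0 < n := lt_of_lt_of_le (Nat.succ_pos _) h2
        exact_mod_cast this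
      apply (div_le_div_iff_of_pos_right hn).2
      push_cast
      linarith
    · exact absurd (le_trans (Nat.le_succ _) h1) h2
    · have hn : (0:ℝ) < (n : ℝ) := by
        have : 0 < n := lt_of_lt_of_le (Nat.succ_pos T) h3
        exact_mod_cast this
      have hTn : (T : ℝ) ≤ (n : ℝ) := by
        have : T ≤ n := le_trans (Nat.le_succ T) h3
        exact_mod_cast this
      exact mul_nonneg (div_nonneg (by linarith) hn.le)
        (Puser_pos μ hμ K hK n).le
    · exact le_refl 0
  · show blockTerm μ K (T + 1) (T + 1) < blockTerm μ K T (T + 1)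
    unfold blockTerm
    rw [if_neg (by omega), if_pos (by omega)]
    have hn : (0:ℝ) < ((T + 1 : ℕ) : ℝ) := by positivity
    apply mul_pos _ (Puser_pos μ hμ K hK (T + 1))
    apply div_pos _ hn
    push_cast
    linarith
  · exact blockTerm_summable μ hμ K hK (T + 1)
  · exact blockTerm_summable μ hμ K hK T
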